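/- arXiv:1409.2830 — 3 statements merged into one kernel-verified Lean document; each statement's English description precedes it below -/
import Mathlib

section
/- Let 0 < H1 ≤ H2, H1·H2 < H1 + H2, c > 0, and h(u,v) = (u^2 + c·|v|^(2H2/H1))^(-H1/2). Then the integral ∫∫_{ℝ²} |1 - e^{iu}|² |1 - e^{iv}|² · h(u,v) / (u² v²) du dv is finite. -/
open Real MeasureTheory Filter Asymptotics

/-!
Weighted AM–GM, `u² + c|v|^(2H₂/H₁) ≥ (u²)^θ (c|v|^(2H₂/H₁))^(1-θ)` with
`θ = H₂/(H₁+H₂)`, bounds the kernel by `C (|u||v|)^(-r)` with `r = H₁H₂/(H₁+H₂)`,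
and `r < 1` is exactly `H₁H₂ < H₁+H₂`. The integrand is then dominated by a product
of two copies of the one-variable function `(1 - cos u)/u² · |u|^(-r)`, which is
integrable for `-1 < r < 1`: near `0` it is at most `|u|^(-r)/2`, and at infinity
at most `2|u|^(-(2+r))`.
-/

lemma one_sub_cos_div_sq_nonneg (u : ℝ) : 0 ≤ (1 - cos u) / u ^ 2 :=
  div_nonneg (sub_nonneg.2 (cos_le_one u)) (sq_nonneg u)

lemma one_sub_cos_div_sq_le_half (u : ℝ) : (1 - cos u) / u ^ 2 ≤ 1 / 2 := by
  rcases eq_or_ne u 0 with rfl | hu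
  · norm_num
  rw [div_le_iff₀ (by positivity)]
  linarith [one_sub_sq_div_two_le_cos (x := u)]

lemma integrable_one_sub_cos_div_sq_mul_abs_rpow_neg {r : ℝ} (hr₀ : -1 < r) (hr₁ : r < 1) :
    Integrable (fun u : ℝ => (1 - cos u) / u ^ 2 * |u| ^ (-r)) := by
  set f : ℝ → ℝ := fun u => (1 - cos u) / u ^ 2 * |u| ^ (-r)
  have hf_meas : AEStronglyMeasurable f := (by fun_prop : Measurable f).aestronglyMeasurable
  have hf_norm (u : ℝ) : ‖f u‖ = (1 - cos u) / u ^ 2 * |u| ^ (-r) :=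
    norm_of_nonneg (mul_nonneg (one_sub_cos_div_sq_nonneg u) (by positivity))
  have hf_loc : LocallyIntegrable f := by
    refine locallyIntegrable_of_norm_le_rpow (C := 1 / 2) (by simp) (by simpa using hr₁)
      (Eventually.of_forall fun u => ?_) hf_meas
    rw [hf_norm, Real.norm_eq_abs]
    exact mul_le_mul_of_nonneg_right (one_sub_cos_div_sq_le_half u) (by positivity)
  have hf_even : norm ∘ f =ᵐ[volume] norm ∘ f ∘ Neg.neg :=
    Eventually.of_forall fun u => by simp [f]
  have hf_decay : f =O[atTop] fun u => u ^ (-(2 + r)) := by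
    refine IsBigO.of_bound 2 ((eventually_gt_atTop 0).mono fun u hu => ?_)
    rw [hf_norm, Real.norm_of_nonneg (by positivity), abs_of_pos hu,
      show -(2 + r) = -2 + -r by ring, rpow_add hu, rpow_neg hu.le 2, rpow_two,
      ← div_eq_inv_mul, div_mul_eq_mul_div, mul_div_assoc']
    gcongr
    linarith [neg_one_le_cos u]
  have hg : IntegrableAtFilter (fun u : ℝ => u ^ (-(2 + r))) atTop :=
    ⟨Set.Ioi 1, Ioi_mem_atTop 1, integrableOn_Ioi_rpow_of_lt (by linarith) one_pos⟩
  exact hf_loc.integrable_of_isBigO_atTop_of_norm_isNegInvariant hf_even hf_decay hg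

lemma integrable_one_sub_cos_mul_one_sub_cos_mul_div_of_norm_le {K : ℝ × ℝ → ℝ} {C r s : ℝ}
    (hr₀ : -1 < r) (hr₁ : r < 1) (hs₀ : -1 < s) (hs₁ : s < 1) (hK_meas : Measurable K)
    (hK : ∀ u v, u ≠ 0 → v ≠ 0 → ‖K (u, v)‖ ≤ C * (|u| ^ (-r) * |v| ^ (-s))) :
    Integrable (fun p : ℝ × ℝ =>
      (2 * (1 - cos p.1)) * (2 * (1 - cos p.2)) * K p / (p.1 ^ 2 * p.2 ^ 2)) := by
  have hdom := ((integrable_one_sub_cos_div_sq_mul_abs_rpow_neg hr₀ hr₁).mul_prod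
    (integrable_one_sub_cos_div_sq_mul_abs_rpow_neg hs₀ hs₁)).const_mul (4 * C)
  rw [← Measure.volume_eq_prod] at hdom
  refine hdom.mono' (by fun_prop : Measurable _).aestronglyMeasurable
    (Eventually.of_forall fun ⟨u, v⟩ => ?_)
  rcases eq_or_ne u 0 with rfl | hu
  · simp
  rcases eq_or_ne v 0 with rfl | hv
  · simp
  have hu₀ := one_sub_cos_div_sq_nonneg u
  have hv₀ := one_sub_cos_div_sq_nonneg v
  calc ‖2 * (1 - cos u) * (2 * (1 - cos v)) * K (u, v) / (u ^ 2 * v ^ 2)‖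
      = 4 * ((1 - cos u) / u ^ 2 * ((1 - cos v) / v ^ 2)) * ‖K (u, v)‖ := by
        rw [show 2 * (1 - cos u) * (2 * (1 - cos v)) * K (u, v) / (u ^ 2 * v ^ 2)
          = 4 * ((1 - cos u) / u ^ 2 * ((1 - cos v) / v ^ 2)) * K (u, v) by ring,
          norm_mul, Real.norm_of_nonneg (by positivity)]
    _ ≤ 4 * ((1 - cos u) / u ^ 2 * ((1 - cos v) / v ^ 2)) * (C * (|u| ^ (-r) * |v| ^ (-s))) := by
        gcongr
        exact hK u v hu hv
    _ = 4 * C * ((1 - cos u) / u ^ 2 * |u| ^ (-r) * ((1 - cos v) / v ^ 2 * |v| ^ (-s))) := by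
        ring

lemma rpow_neg_add_le_rpow_mul_rpow {x y s θ : ℝ} (hx : 0 < x) (hy : 0 < y) (hs : 0 ≤ s)
    (hθ₀ : 0 ≤ θ) (hθ₁ : θ ≤ 1) :
    (x + y) ^ (-s) ≤ x ^ (-(θ * s)) * y ^ (-((1 - θ) * s)) := by
  have hgm : x ^ θ * y ^ (1 - θ) ≤ x + y :=
    (geom_mean_le_arith_mean2_weighted hθ₀ (sub_nonneg.2 hθ₁) hx.le hy.le (by ring)).trans
      (by nlinarith)
  calc (x + y) ^ (-s) ≤ (x ^ θ * y ^ (1 - θ)) ^ (-s) :=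
        rpow_le_rpow_of_nonpos (by positivity) hgm (by linarith)
    _ = x ^ (-(θ * s)) * y ^ (-((1 - θ) * s)) := by
        rw [mul_rpow (by positivity) (by positivity), ← rpow_mul hx.le, ← rpow_mul hy.le]
        ring_nf

lemma sq_add_mul_abs_rpow_rpow_neg_le {H₁ H₂ c u v : ℝ} (hH₁ : 0 < H₁) (hH₂ : 0 < H₂)
    (hc : 0 < c) (hu : u ≠ 0) (hv : v ≠ 0) :
    (u ^ 2 + c * |v| ^ (2 * H₂ / H₁)) ^ (-(H₁ / 2)) ≤
      c ^ (-(H₁ ^ 2 / (2 * (H₁ + H₂)))) *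
        (|u| ^ (-(H₁ * H₂ / (H₁ + H₂))) * |v| ^ (-(H₁ * H₂ / (H₁ + H₂)))) := by
  have hu' : 0 < |u| := abs_pos.2 hu
  have hv' : 0 < |v| := abs_pos.2 hv
  have hθ₁ : H₂ / (H₁ + H₂) ≤ 1 := (div_le_one (by positivity)).2 (by linarith)
  refine (rpow_neg_add_le_rpow_mul_rpow (by positivity) (by positivity) (by positivity)
    (by positivity) hθ₁).trans_eq ?_
  rw [← sq_abs u, ← rpow_natCast, mul_rpow hc.le (by positivity), ← rpow_mul hu'.le,
    ← rpow_mul hv'.le, mul_left_comm]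
  congr 2
  all_goals try congr 1
  all_goals push_cast; field_simp <;> ring

theorem stmt1 (H1 H2 c : ℝ) (h1 : 0 < H1) (h12 : H1 ≤ H2)
    (hprod : H1 * H2 < H1 + H2) (hc : 0 < c) :
    Integrable (fun p : ℝ × ℝ =>
      (2 * (1 - Real.cos p.1)) * (2 * (1 - Real.cos p.2)) *
        ((p.1 ^ (2 : ℕ) + c * |p.2| ^ (2 * H2 / H1)) ^ (-(H1 / 2))) /
        (p.1 ^ (2 : ℕ) * p.2 ^ (2 : ℕ))) := by
  have h2 : 0 < H2 := h1.trans_le h12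
  have hr₀ : 0 < H1 * H2 / (H1 + H2) := by positivity
  have hr₁ : H1 * H2 / (H1 + H2) < 1 := (div_lt_one (by positivity)).2 hprod
  refine integrable_one_sub_cos_mul_one_sub_cos_mul_div_of_norm_le
    (C := c ^ (-(H1 ^ 2 / (2 * (H1 + H2))))) (by linarith) hr₁ (by linarith) hr₁ (by fun_prop)
    fun u v hu hv => ?_
  rw [Real.norm_of_nonneg (by positivity)]
  exact sq_add_mul_abs_rpow_rpow_neg_le h1 h2 hc hu hv
end

section
/- For 0 < H1 ≤ H2 with H1·H2 < H1 + H2 and H2 > 1, the double integral ∫_0^∞ (1+u²)^(-1) ∫_0^{u^{-H1/H2}} u^{H1/H2 - H1} (1 + z^{2H2/H1})^(-H1/2) dz du is finite. -/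
/-!
The integrand factors as `f(u) g(z)` with `f u = (1 + u²)⁻¹ u^(H1/H2 - H1)` and
`g z = (1 + z^(2H2/H1))^(-H1/2)`, so it suffices that both factors are integrable on `(0, ∞)`:
then their product is integrable on the whole quadrant, which contains the region of integration.
Each factor is dominated by a power `x^α` with `α > -1` on `(0, 1]` and by a power `x^β` with
`β < -1` on `(1, ∞)`. For `f` the exponents are `H1/H2 - H1` and `H1/H2 - H1 - 2`, and
`H1/H2 - H1 > -1` is exactly `H1 H2 < H1 + H2`; for `g` they are `0` and `-H2`, using `H2 > 1`.
-/

open Real MeasureTheory Set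

lemma integrableOn_Ioi_zero_of_norm_le_rpow {f : ℝ → ℝ} {α β : ℝ} (hα : -1 < α) (hβ : β < -1)
    (hf : ContinuousOn f (Ioi 0)) (h_zero : ∀ x ∈ Ioc (0 : ℝ) 1, ‖f x‖ ≤ x ^ α)
    (h_top : ∀ x ∈ Ioi (1 : ℝ), ‖f x‖ ≤ x ^ β) :
    IntegrableOn f (Ioi 0) := by
  have h_Ioc : IntegrableOn f (Ioc 0 1) := by
    have hg : IntegrableOn (fun x : ℝ => x ^ α) (Ioc 0 1) :=
      (intervalIntegrable_iff_integrableOn_Ioc_of_le zero_le_one).1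
        (intervalIntegral.intervalIntegrable_rpow' hα)
    refine hg.mono' ((hf.mono Ioc_subset_Ioi_self).aestronglyMeasurable measurableSet_Ioc) ?_
    exact (ae_restrict_mem measurableSet_Ioc).mono h_zero
  have h_Ioi : IntegrableOn f (Ioi 1) := by
    refine (integrableOn_Ioi_rpow_of_lt hβ one_pos).mono'
      ((hf.mono (Ioi_subset_Ioi zero_le_one)).aestronglyMeasurable measurableSet_Ioi) ?_
    exact (ae_restrict_mem measurableSet_Ioi).mono h_top
  simpa only [Ioc_union_Ioi_eq_Ioi zero_le_one] using h_Ioc.union h_Ioi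

lemma integrableOn_Ioi_inv_one_add_sq_mul_rpow {a : ℝ} (ha₁ : -1 < a) (ha₂ : a < 1) :
    IntegrableOn (fun u : ℝ => (1 + u ^ 2)⁻¹ * u ^ a) (Ioi 0) := by
  refine integrableOn_Ioi_zero_of_norm_le_rpow ha₁ (by linarith : a - 2 < -1) ?_ ?_ ?_
  · exact ((continuous_const.add (continuous_pow 2)).continuousOn.inv₀ fun u _ =>
      (by positivity : (0 : ℝ) < 1 + u ^ 2).ne').mul (continuousOn_id.rpow_const fun u hu => Or.inl (ne_of_gt hu))
  · intro u ⟨hu, _⟩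
    have hua := rpow_pos_of_pos hu a
    rw [norm_of_nonneg (by positivity)]
    calc (1 + u ^ 2)⁻¹ * u ^ a ≤ 1 * u ^ a := by
          gcongr
          exact inv_le_one_of_one_le₀ (by nlinarith)
      _ = u ^ a := one_mul _
  · intro u (hu : 1 < u)
    have hu0 : 0 < u := one_pos.trans hu
    have hua := rpow_pos_of_pos hu0 a
    rw [norm_of_nonneg (by positivity)]
    calc (1 + u ^ 2)⁻¹ * u ^ a ≤ (u ^ (2 : ℝ))⁻¹ * u ^ a := by
          rw [rpow_two]
          gcongr
          linarith
      _ = u ^ (a - 2) := by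
          rw [← rpow_neg hu0.le, ← rpow_add hu0]
          ring_nf

lemma integrableOn_Ioi_one_add_rpow_rpow_neg {b c : ℝ} (hb : 0 < b) (hbc : 1 < b * c) :
    IntegrableOn (fun z : ℝ => (1 + z ^ b) ^ (-c)) (Ioi 0) := by
  have hc : 0 < c := pos_of_mul_pos_right (one_pos.trans hbc) hb.le
  refine integrableOn_Ioi_zero_of_norm_le_rpow neg_one_lt_zero (neg_lt_neg hbc) ?_ ?_ ?_
  · refine ContinuousOn.rpow_const ?_ fun z hz => Or.inl ?_
    · exact continuousOn_const.add
        (continuousOn_id.rpow_const fun z hz => Or.inl (ne_of_gt hz))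
    · have := rpow_pos_of_pos hz b
      positivity
  · intro z ⟨hz, _⟩
    have hzb := rpow_pos_of_pos hz b
    rw [norm_of_nonneg (by positivity), rpow_zero]
    exact rpow_le_one_of_one_le_of_nonpos (by linarith) (by linarith)
  · intro z (hz : 1 < z)
    have hz0 : 0 < z := one_pos.trans hz
    have hzb := rpow_pos_of_pos hz0 b
    rw [norm_of_nonneg (by positivity)]
    calc (1 + z ^ b) ^ (-c) ≤ (z ^ b) ^ (-c) :=
          rpow_le_rpow_of_nonpos hzb (by linarith) (by linarith)
      _ = z ^ (-(b * c)) := by rw [← rpow_mul hz0.le, mul_neg]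

theorem stmt2_general (H1 H2 : ℝ) (h1 : 0 < H1) (h2 : 1 < H2)
    (hprod : H1 * H2 < H1 + H2) :
    IntegrableOn (fun p : ℝ × ℝ =>
        (1 + p.1 ^ (2 : ℕ))⁻¹ * p.1 ^ (H1 / H2 - H1) *
          (1 + p.2 ^ (2 * H2 / H1)) ^ (-(H1 / 2)))
      {p : ℝ × ℝ | 0 < p.1 ∧ 0 < p.2 ∧ p.2 < p.1 ^ (-(H1 / H2))} := by
  have hH2 : 0 < H2 := one_pos.trans h2
  have h_exp_gt : -1 < H1 / H2 - H1 := by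
    have : H1 - 1 < H1 / H2 := by rw [lt_div_iff₀ hH2]; nlinarith
    linarith
  have h_exp_lt : H1 / H2 - H1 < 1 := by
    have : H1 / H2 < H1 := div_lt_self h1 h2
    linarith
  have hf := integrableOn_Ioi_inv_one_add_sq_mul_rpow h_exp_gt h_exp_lt
  have hg := integrableOn_Ioi_one_add_rpow_rpow_neg (b := 2 * H2 / H1) (c := H1 / 2)
    (by positivity) (by field_simp; exact h2)
  refine IntegrableOn.mono_set (t := Ioi 0 ×ˢ Ioi 0) ?_ fun p hp => ⟨hp.1, hp.2.1⟩
  rw [IntegrableOn, Measure.volume_eq_prod, ← Measure.prod_restrict]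
  exact hf.integrable.mul_prod hg.integrable

theorem stmt2 (H1 H2 : ℝ) (h1 : 0 < H1) (h12 : H1 ≤ H2) (h2 : 1 < H2)
    (hprod : H1 * H2 < H1 + H2) :
    IntegrableOn (fun p : ℝ × ℝ =>
        (1 + p.1 ^ (2 : ℕ))⁻¹ * p.1 ^ (H1 / H2 - H1) *
          (1 + p.2 ^ (2 * H2 / H1)) ^ (-(H1 / 2)))
      {p : ℝ × ℝ | 0 < p.1 ∧ 0 < p.2 ∧ p.2 < p.1 ^ (-(H1 / H2))} :=
  stmt2_general H1 H2 h1 h2 hprod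
end

section
/- Let q₁, q₂ > 0 satisfy (q₁+q₂)/2 < q₁q₂ < q₁+q₂, and let a(t,s) = g(t,s)/(|t|² + |s|^{2q₂/q₁})^{q₁/2} for (t,s) ∈ ℤ²\{(0,0)} where g is bounded with g(t,s) → 1 as |t|+|s| → ∞. Then Σ_{(t,s)∈ℤ²} |a(t,s)|² < ∞ while Σ_{(t,s)∈ℤ²} |a(t,s)| = ∞. -/
/-
Write `u = |t|²` and `v = |s|^(2q₂/q₁)`, so that `a(t,s) = g(t,s) / (u + v)^(q₁/2)`. Since
`(u^r + v^r)/2 ≤ (u + v)^r ≤ 2^r (u^r + v^r)` for `r ≥ 0`, the sequences `|a|²` and `|a|` are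
comparable (up to constants, away from finitely many points) with the anisotropic lattice sums
`1 / (|t|^α + |s|^β)` for `(α, β) = (2q₁, 2q₂)` and `(α, β) = (q₁, q₂)` respectively. Such a sum
converges iff `1/α + 1/β < 1`: for convergence split `|t|^α + |s|^β ≥ |t|^(αθ) |s|^(β(1-θ))` by the
weighted AM-GM inequality with `1/α < θ < 1 - 1/β`; for divergence, in the row `t` the
`≈ |t|^(α/β)` terms with `|s|^β ≤ |t|^α` already contribute `≈ |t|^(α/β - α)`. The two
conditions on `q₁ q₂` are exactly `1/(2q₁) + 1/(2q₂) < 1` and `1/q₁ + 1/q₂ > 1`.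
-/

open Real Filter

lemma Real.add_rpow_le_two_rpow_mul_rpow_add_rpow {a b p : ℝ} (ha : 0 ≤ a) (hb : 0 ≤ b)
    (hp : 0 ≤ p) : (a + b) ^ p ≤ 2 ^ p * (a ^ p + b ^ p) := calc
  (a + b) ^ p ≤ (2 * max a b) ^ p := by
    rw [two_mul]; gcongr; exacts [le_max_left _ _, le_max_right _ _]
  _ = 2 ^ p * max a b ^ p := mul_rpow zero_le_two (le_max_of_le_left ha)
  _ = 2 ^ p * max (a ^ p) (b ^ p) := by rw [rpow_max ha hb hp]
  _ ≤ 2 ^ p * (a ^ p + b ^ p) := by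
    gcongr; exact max_le_add_of_nonneg (rpow_nonneg ha p) (rpow_nonneg hb p)

lemma Real.rpow_add_rpow_le_two_mul_add_rpow {a b p : ℝ} (ha : 0 ≤ a) (hb : 0 ≤ b)
    (hp : 0 ≤ p) : a ^ p + b ^ p ≤ 2 * (a + b) ^ p := by
  have hal := rpow_le_rpow ha (le_add_of_nonneg_right hb) hp
  have hbl := rpow_le_rpow hb (le_add_of_nonneg_left ha) hp
  linarith

lemma abs_rpow_rpow_of_mul_eq {x a b c : ℝ} (h : a * b = c) : (|x| ^ a) ^ b = |x| ^ c := by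
  rw [← rpow_mul (abs_nonneg x), h]

lemma one_le_abs_intCast {n : ℤ} (hn : n ≠ 0) : (1 : ℝ) ≤ |(n : ℝ)| := mod_cast Int.one_le_abs hn

lemma summable_max_one_abs_int_rpow_neg {r : ℝ} (hr : 1 < r) :
    Summable fun n : ℤ => max 1 |(n : ℝ)| ^ (-r) := by
  refine (summable_abs_int_rpow hr).congr_cofinite ?_
  filter_upwards [eventually_cofinite_ne 0] with n hn
  rw [max_eq_right (one_le_abs_intCast hn)]

lemma abs_rpow_add_abs_rpow_pos (α β : ℝ) {p : ℤ × ℤ} (hp : p ≠ 0) :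
    0 < |(p.1 : ℝ)| ^ α + |(p.2 : ℝ)| ^ β := by
  have hnn (n : ℤ) (γ : ℝ) : 0 ≤ |(n : ℝ)| ^ γ := rpow_nonneg (abs_nonneg _) γ
  have hpos {n : ℤ} (hn : n ≠ 0) (γ : ℝ) : 0 < |(n : ℝ)| ^ γ :=
    rpow_pos_of_pos (abs_pos.2 (Int.cast_ne_zero.2 hn)) γ
  by_cases h1 : p.1 = 0
  · exact add_pos_of_nonneg_of_pos (hnn _ _) (hpos (fun h2 => hp (Prod.ext h1 h2)) _)
  · exact add_pos_of_pos_of_nonneg (hpos h1 _) (hnn _ _)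

lemma max_one_rpow_add_max_one_rpow_le {α β : ℝ} (hα : 0 ≤ α) (hβ : 0 ≤ β) {p : ℤ × ℤ}
    (hp : p ≠ 0) :
    max 1 |(p.1 : ℝ)| ^ α + max 1 |(p.2 : ℝ)| ^ β ≤ 2 * (|(p.1 : ℝ)| ^ α + |(p.2 : ℝ)| ^ β) := by
  obtain ⟨t, s⟩ := p
  have hnn (n : ℤ) (γ : ℝ) : 0 ≤ |(n : ℝ)| ^ γ := rpow_nonneg (abs_nonneg _) γ
  have hmax {n : ℤ} (hn : n ≠ 0) : max 1 |(n : ℝ)| = |(n : ℝ)| :=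
    max_eq_right (one_le_abs_intCast hn)
  have hone {n : ℤ} (hn : n ≠ 0) {γ : ℝ} (hγ : 0 ≤ γ) : 1 ≤ |(n : ℝ)| ^ γ :=
    one_le_rpow (one_le_abs_intCast hn) hγ
  rcases eq_or_ne t 0 with rfl | ht
  · have hs : s ≠ 0 := fun hs => hp (by simp [hs])
    simp only [Int.cast_zero, abs_zero, zero_le_one, max_eq_left, one_rpow, hmax hs]
    linarith [hone hs hβ, rpow_nonneg (le_refl (0 : ℝ)) α]
  rcases eq_or_ne s 0 with rfl | hs
  · simp only [Int.cast_zero, abs_zero, zero_le_one, max_eq_left, one_rpow, hmax ht]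
    linarith [hone ht hα, rpow_nonneg (le_refl (0 : ℝ)) β]
  · rw [hmax ht, hmax hs]
    linarith [hnn t α, hnn s β]

lemma one_div_abs_rpow_add_abs_rpow_le {α β θ : ℝ} (hα : 0 < α) (hβ : 0 < β) (hθ₀ : 0 ≤ θ)
    (hθ₁ : θ ≤ 1) (p : ℤ × ℤ) :
    1 / (|(p.1 : ℝ)| ^ α + |(p.2 : ℝ)| ^ β) ≤
      2 * (max 1 |(p.1 : ℝ)| ^ (-(α * θ)) * max 1 |(p.2 : ℝ)| ^ (-(β * (1 - θ)))) := by
  rcases eq_or_ne p 0 with rfl | hp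
  · simp [zero_rpow hα.ne', zero_rpow hβ.ne']
  set X := max 1 |(p.1 : ℝ)| ^ α
  set Y := max 1 |(p.2 : ℝ)| ^ β
  have hX : 0 ≤ X := by positivity
  have hY : 0 ≤ Y := by positivity
  have hgm : X ^ θ * Y ^ (1 - θ) ≤ X + Y := by
    have := geom_mean_le_arith_mean2_weighted hθ₀ (sub_nonneg.2 hθ₁) hX hY (by ring)
    nlinarith
  have hprod : X ^ θ * Y ^ (1 - θ) =
      max 1 |(p.1 : ℝ)| ^ (α * θ) * max 1 |(p.2 : ℝ)| ^ (β * (1 - θ)) := by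
    rw [← rpow_mul (by positivity), ← rpow_mul (by positivity)]
  have hXY := max_one_rpow_add_max_one_rpow_le hα.le hβ.le hp
  have hD := abs_rpow_add_abs_rpow_pos α β hp
  rw [rpow_neg (by positivity), rpow_neg (by positivity), ← mul_inv, ← hprod, ← div_eq_mul_inv,
    div_le_div_iff₀ hD (by positivity)]
  linarith

lemma rpow_sub_div_two_le_tsum {x α β : ℝ} (hx : 0 < x) (hβ : 0 < β)
    (hf : Summable fun s : ℤ => 1 / (x ^ α + |(s : ℝ)| ^ β)) :
    x ^ (α / β - α) / 2 ≤ ∑' s : ℤ, 1 / (x ^ α + |(s : ℝ)| ^ β) := by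
  set N := ⌊x ^ (α / β)⌋₊
  have hxα : 0 < x ^ α := rpow_pos_of_pos hx α
  have hterm : ∀ k ∈ Finset.range (N + 1),
      1 / (2 * x ^ α) ≤ 1 / (x ^ α + |((k : ℤ) : ℝ)| ^ β) := by
    intro k hk
    have hkN : (k : ℝ) ≤ x ^ (α / β) :=
      (Nat.cast_le.2 (Nat.lt_succ_iff.1 (Finset.mem_range.1 hk))).trans
        (Nat.floor_le (rpow_nonneg hx.le _))
    have hkβ : |((k : ℤ) : ℝ)| ^ β ≤ x ^ α := calc
      |((k : ℤ) : ℝ)| ^ β = (k : ℝ) ^ β := by simp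
      _ ≤ (x ^ (α / β)) ^ β := rpow_le_rpow (Nat.cast_nonneg k) hkN hβ.le
      _ = x ^ α := by rw [← rpow_mul hx.le, div_mul_cancel₀ α hβ.ne']
    gcongr
    linarith
  calc x ^ (α / β - α) / 2 = x ^ (α / β) * (1 / (2 * x ^ α)) := by
        rw [rpow_sub hx]; field_simp
    _ ≤ (N + 1) * (1 / (2 * x ^ α)) := by
        gcongr; exact (Nat.lt_floor_add_one _).le
    _ = ∑ k ∈ Finset.range (N + 1), 1 / (2 * x ^ α) := by simp
    _ ≤ ∑ k ∈ Finset.range (N + 1), 1 / (x ^ α + |((k : ℤ) : ℝ)| ^ β) :=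
        Finset.sum_le_sum hterm
    _ = ∑ s ∈ (Finset.range (N + 1)).map (Nat.castEmbedding : ℕ ↪ ℤ),
          1 / (x ^ α + |(s : ℝ)| ^ β) := by
        rw [Finset.sum_map]; rfl
    _ ≤ ∑' s : ℤ, 1 / (x ^ α + |(s : ℝ)| ^ β) :=
        hf.sum_le_tsum _ fun s _ => by positivity

/-- At the origin the summand is `1 / 0 = 0`. -/
theorem summable_one_div_abs_rpow_add_abs_rpow_iff {α β : ℝ} (hα : 0 < α) (hβ : 0 < β) :
    Summable (fun p : ℤ × ℤ => 1 / (|(p.1 : ℝ)| ^ α + |(p.2 : ℝ)| ^ β)) ↔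
      1 / α + 1 / β < 1 := by
  have hnn : 0 ≤ fun p : ℤ × ℤ => 1 / (|(p.1 : ℝ)| ^ α + |(p.2 : ℝ)| ^ β) :=
    fun p => by positivity
  constructor
  · intro h
    obtain ⟨hfib, hsum⟩ := (summable_prod_of_nonneg hnn).1 h
    have he : Summable fun t : ℤ => 1 / |(t : ℝ) + 0| ^ (α - α / β) := by
      refine (hsum.mul_left 2).of_norm_bounded_eventually ?_
      filter_upwards [eventually_cofinite_ne 0] with t ht
      have := rpow_sub_div_two_le_tsum (abs_pos.2 (Int.cast_ne_zero.2 ht)) hβ (hfib t)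
      rw [add_zero, Real.norm_of_nonneg (by positivity), one_div, ← rpow_neg (abs_nonneg _),
        neg_sub]
      linarith
    have he1 := (Real.summable_one_div_int_add_rpow 0 _).1 he
    have hαβ : 1 / α < 1 - 1 / β := by
      rw [div_lt_iff₀ hα]
      linarith [show (1 - 1 / β) * α = α - α / β by ring]
    linarith
  · intro h
    obtain ⟨θ, hαθ, hθβ⟩ := exists_between (lt_sub_iff_add_lt.2 h)
    have hr : 1 < α * θ := (div_lt_iff₀' hα).1 hαθ
    have hσ : 1 < β * (1 - θ) := (div_lt_iff₀' hβ).1 (lt_sub_comm.1 hθβ)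
    have hθ₀ : 0 ≤ θ := le_trans (by positivity) hαθ.le
    have hθ₁ : θ ≤ 1 := by linarith [one_div_pos.2 hβ]
    refine Summable.of_nonneg_of_le hnn (one_div_abs_rpow_add_abs_rpow_le hα hβ hθ₀ hθ₁)
      (Summable.mul_left 2 ?_)
    exact (summable_max_one_abs_int_rpow_neg hr).mul_of_nonneg
      (summable_max_one_abs_int_rpow_neg hσ) (fun _ => by positivity) (fun _ => by positivity)

section AnisotropicKernel

variable {q₁ q₂ t s : ℝ}

lemma sq_div_rpow_le (hq₁ : 0 < q₁) (c : ℝ) (h : 0 < |t| ^ (2 * q₁) + |s| ^ (2 * q₂)) :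
    (c / (|t| ^ (2 : ℝ) + |s| ^ (2 * q₂ / q₁)) ^ (q₁ / 2)) ^ 2 ≤
      2 * c ^ 2 * (1 / (|t| ^ (2 * q₁) + |s| ^ (2 * q₂))) := by
  have hu : 0 ≤ |t| ^ (2 : ℝ) := by positivity
  have hv : 0 ≤ |s| ^ (2 * q₂ / q₁) := by positivity
  have hsq : ((|t| ^ (2 : ℝ) + |s| ^ (2 * q₂ / q₁)) ^ (q₁ / 2)) ^ 2 =
      (|t| ^ (2 : ℝ) + |s| ^ (2 * q₂ / q₁)) ^ q₁ := by
    rw [← rpow_natCast, ← rpow_mul (add_nonneg hu hv)]; norm_num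
  have hlow := rpow_add_rpow_le_two_mul_add_rpow hu hv hq₁.le
  rw [abs_rpow_rpow_of_mul_eq rfl, abs_rpow_rpow_of_mul_eq (div_mul_cancel₀ _ hq₁.ne')] at hlow
  rw [div_pow, hsq]
  calc c ^ 2 / (|t| ^ (2 : ℝ) + |s| ^ (2 * q₂ / q₁)) ^ q₁
      ≤ c ^ 2 / ((|t| ^ (2 * q₁) + |s| ^ (2 * q₂)) / 2) :=
        div_le_div_of_nonneg_left (sq_nonneg c) (half_pos h) (by linarith)
    _ = 2 * c ^ 2 * (1 / (|t| ^ (2 * q₁) + |s| ^ (2 * q₂))) := by field_simp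

lemma one_div_le_mul_abs_div_rpow (hq₁ : 0 < q₁) (h : 0 < |t| ^ q₁ + |s| ^ q₂) {c : ℝ}
    (hc : 1 / 2 ≤ |c|) :
    1 / (|t| ^ q₁ + |s| ^ q₂) ≤
      2 * 2 ^ (q₁ / 2) * |c / (|t| ^ (2 : ℝ) + |s| ^ (2 * q₂ / q₁)) ^ (q₁ / 2)| := by
  set D := (|t| ^ (2 : ℝ) + |s| ^ (2 * q₂ / q₁)) ^ (q₁ / 2)
  have hu : 0 ≤ |t| ^ (2 : ℝ) := by positivity
  have hv : 0 ≤ |s| ^ (2 * q₂ / q₁) := by positivity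
  have hlow := rpow_add_rpow_le_two_mul_add_rpow hu hv (half_pos hq₁).le
  have hup := add_rpow_le_two_rpow_mul_rpow_add_rpow hu hv (half_pos hq₁).le
  have ht : (|t| ^ (2 : ℝ)) ^ (q₁ / 2) = |t| ^ q₁ := abs_rpow_rpow_of_mul_eq (by ring)
  have hs : (|s| ^ (2 * q₂ / q₁)) ^ (q₁ / 2) = |s| ^ q₂ :=
    abs_rpow_rpow_of_mul_eq (by field_simp)
  rw [ht, hs] at hlow hup
  have hD : 0 < D := by linarith
  rw [abs_div, abs_of_pos hD]
  calc 1 / (|t| ^ q₁ + |s| ^ q₂) = 2 ^ (q₁ / 2) / (2 ^ (q₁ / 2) * (|t| ^ q₁ + |s| ^ q₂)) := by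
        field_simp
    _ ≤ 2 ^ (q₁ / 2) / D := div_le_div_of_nonneg_left (by positivity) hD hup
    _ ≤ 2 ^ (q₁ / 2) * (2 * |c|) / D := by
        gcongr
        exact le_mul_of_one_le_right (by positivity) (by linarith)
    _ = 2 * 2 ^ (q₁ / 2) * (|c| / D) := by ring

end AnisotropicKernel

theorem stmt19 (q1 q2 : ℝ) (hq1 : 0 < q1) (hq2 : 0 < q2)
    (hlow : (q1 + q2) / 2 < q1 * q2) (hup : q1 * q2 < q1 + q2)
    (g : ℤ × ℤ → ℝ) (M : ℝ) (hgbdd : ∀ p, |g p| ≤ M)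
    (hglim : Filter.Tendsto g Filter.cofinite (nhds 1))
    (a : ℤ × ℤ → ℝ)
    (ha : ∀ p : ℤ × ℤ, p ≠ (0, 0) →
      a p = g p / ((|(p.1 : ℝ)| ^ (2 : ℝ) +
        |(p.2 : ℝ)| ^ (2 * q2 / q1)) ^ (q1 / 2))) :
    Summable (fun p : ℤ × ℤ => |a p| ^ (2 : ℕ)) ∧
      ¬ Summable (fun p : ℤ × ℤ => |a p|) := by
  constructor
  · have hsum := (summable_one_div_abs_rpow_add_abs_rpow_iff (mul_pos two_pos hq1)
      (mul_pos two_pos hq2)).2 (by field_simp; linarith)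
    refine (hsum.mul_left (2 * M ^ 2)).of_norm_bounded_eventually ?_
    filter_upwards [eventually_cofinite_ne 0] with p hp
    have hgM : g p ^ 2 ≤ M ^ 2 := by
      simpa only [sq_abs] using pow_le_pow_left₀ (abs_nonneg _) (hgbdd p) 2
    rw [norm_pow, norm_abs_eq_norm, Real.norm_eq_abs, sq_abs, ha p hp]
    refine (sq_div_rpow_le hq1 _ (abs_rpow_add_abs_rpow_pos _ _ hp)).trans ?_
    gcongr
  · intro hsum
    have hbound : Summable fun p : ℤ × ℤ => 1 / (|(p.1 : ℝ)| ^ q1 + |(p.2 : ℝ)| ^ q2) := by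
      refine (hsum.mul_left (2 * 2 ^ (q1 / 2))).of_norm_bounded_eventually ?_
      filter_upwards [eventually_cofinite_ne 0, hglim.eventually (lt_mem_nhds one_half_lt_one)]
        with p hp hgp
      rw [Real.norm_of_nonneg (by positivity), ha p hp]
      exact one_div_le_mul_abs_div_rpow hq1 (abs_rpow_add_abs_rpow_pos _ _ hp)
        (hgp.le.trans (le_abs_self _))
    have hcrit := (summable_one_div_abs_rpow_add_abs_rpow_iff hq1 hq2).1 hbound
    rw [div_add_div _ _ hq1.ne' hq2.ne', div_lt_one (by positivity)] at hcrit
    linarith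
end
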